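/- For a GARK method applied to the antisymmetric test problem y' = [[0, η],[−η, 0]] y, the stability matrix equals R₂(w) = [[1 − w² b_fᵀ A^{fs} d_s, w b_fᵀ d_f],[−w b_sᵀ d_s, 1 − w² b_sᵀ A^{sf} d_f]], where w = Hη, d_f = (I + w² A^{fs} A^{sf})⁻¹ 𝟙, d_s = (I + w² A^{sf} A^{fs})⁻¹ 𝟙, provided the inverses exist. That is, I₂ + w · diag(b_fᵀ, b_sᵀ) · [[I, −w A^{fs}],[w A^{sf}, I]]⁻¹ · [[0, 𝟙],[−𝟙, 0]] equals the stated 2×2 matrix. -/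

import Mathlib

/-!
The block matrix `[[I, -w A], [w B, I]]` has the right inverse
`[[S⁻¹, w A T⁻¹], [-w B S⁻¹, T⁻¹]]` with `S = I + w² A B`, `T = I + w² B A`: each block of the
product collapses to `S S⁻¹`, `T T⁻¹` or cancels. By the Weinstein–Aronszajn identity
`det S = det T`, so `T` is invertible as soon as `S` is. Multiplying by `diag(b_fᵀ, b_sᵀ)` on the
left and `[[0, 𝟙], [-𝟙, 0]]` on the right reads off the row sums of the four blocks against
`b_f` and `b_s`.
-/

open Matrix

namespace Stmt9

variable {sf ss : ℕ}

/-- `diag(b_fᵀ, b_sᵀ)`. -/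
def Bmat (bf : Fin sf → ℝ) (bs : Fin ss → ℝ) : Matrix (Fin 2) (Fin sf ⊕ Fin ss) ℝ :=
  Matrix.of fun i => Sum.elim (fun j => if i = 0 then bf j else 0)
    (fun j => if i = 1 then bs j else 0)

/-- The matrix `[[0, 𝟙],[−𝟙, 0]]`. -/
def Wmat : Matrix (Fin sf ⊕ Fin ss) (Fin 2) ℝ :=
  Matrix.of fun i j => Sum.elim (fun _ => if j = 1 then (1 : ℝ) else 0)
    (fun _ => if j = 0 then (-1 : ℝ) else 0) i

section BlockInverse

variable {m n R : Type*} [Fintype m] [Fintype n] [DecidableEq m] [DecidableEq n] [CommRing R]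

theorem det_one_add_smul_mul_comm (c : R) (A : Matrix m n R) (B : Matrix n m R) :
    (1 + c • (A * B)).det = (1 + c • (B * A)).det := by
  rw [← Matrix.smul_mul, det_one_add_mul_comm, Matrix.mul_smul]

theorem inv_fromBlocks_one_neg_smul (w : R) (A : Matrix m n R) (B : Matrix n m R)
    (h : IsUnit (1 + w ^ 2 • (A * B)).det) :
    (fromBlocks 1 (-(w • A)) (w • B) 1)⁻¹ =
      fromBlocks (1 + w ^ 2 • (A * B))⁻¹ (w • (A * (1 + w ^ 2 • (B * A))⁻¹))
        (-(w • (B * (1 + w ^ 2 • (A * B))⁻¹))) (1 + w ^ 2 • (B * A))⁻¹ := by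
  set S := 1 + w ^ 2 • (A * B) with hS
  set T := 1 + w ^ 2 • (B * A) with hT
  have hT_unit : IsUnit T.det := by rwa [hT, ← det_one_add_smul_mul_comm]
  refine inv_eq_right_inv ?_
  rw [fromBlocks_multiply, ← fromBlocks_one]
  congr 1
  · calc _ = S * S⁻¹ := by
          simp only [hS, Matrix.one_mul, Matrix.neg_mul, Matrix.mul_neg, smul_neg, neg_neg,
            Matrix.add_mul, Matrix.smul_mul, Matrix.mul_smul, smul_smul, sq, Matrix.mul_assoc]
      _ = 1 := mul_nonsing_inv _ h
  · simp [Matrix.smul_mul]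
  · simp [Matrix.smul_mul]
  · calc _ = T * T⁻¹ := by
          simp only [hT, Matrix.one_mul, Matrix.add_mul, Matrix.smul_mul, Matrix.mul_smul,
            smul_smul, sq, Matrix.mul_assoc, add_comm]
      _ = 1 := mul_nonsing_inv _ hT_unit

end BlockInverse

theorem Bmat_mul_fromBlocks_mul_Wmat (bf : Fin sf → ℝ) (bs : Fin ss → ℝ)
    (P : Matrix (Fin sf) (Fin sf) ℝ) (Q : Matrix (Fin sf) (Fin ss) ℝ)
    (U : Matrix (Fin ss) (Fin sf) ℝ) (V : Matrix (Fin ss) (Fin ss) ℝ) :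
    Bmat bf bs * fromBlocks P Q U V * (Wmat : Matrix (Fin sf ⊕ Fin ss) (Fin 2) ℝ) =
      !![-(bf ⬝ᵥ (Q *ᵥ fun _ => 1)), bf ⬝ᵥ (P *ᵥ fun _ => 1);
         -(bs ⬝ᵥ (V *ᵥ fun _ => 1)), bs ⬝ᵥ (U *ᵥ fun _ => 1)] := by
  rw [Matrix.mul_assoc]
  ext i j
  fin_cases i <;> fin_cases j <;>
    simp [Bmat, Wmat, Matrix.mul_apply, Fintype.sum_sum_type, dotProduct, mulVec]

theorem stmt_9_general (bf : Fin sf → ℝ) (bs : Fin ss → ℝ)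
    (Afs : Matrix (Fin sf) (Fin ss) ℝ) (Asf : Matrix (Fin ss) (Fin sf) ℝ) (w : ℝ)
    (h1 : IsUnit ((1 + (w ^ 2) • (Afs * Asf)) : Matrix (Fin sf) (Fin sf) ℝ).det) :
    let df : Fin sf → ℝ := (1 + (w ^ 2) • (Afs * Asf))⁻¹ *ᵥ fun _ => 1
    let ds : Fin ss → ℝ := (1 + (w ^ 2) • (Asf * Afs))⁻¹ *ᵥ fun _ => 1
    (1 : Matrix (Fin 2) (Fin 2) ℝ) +
        w • (Bmat bf bs * (Matrix.fromBlocks 1 (-(w • Afs)) (w • Asf) 1)⁻¹ * Wmat) =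
      !![1 - w ^ 2 * (bf ⬝ᵥ (Afs *ᵥ ds)), w * (bf ⬝ᵥ df);
         -(w * (bs ⬝ᵥ ds)), 1 - w ^ 2 * (bs ⬝ᵥ (Asf *ᵥ df))] := by
  intro df ds
  -- `Wmat`'s sizes are unknown when the statement elaborates its product, so it is taken
  -- with the (defeq) `CStarMatrix` multiplication; restate it with `Matrix`'s.
  change (1 : Matrix (Fin 2) (Fin 2) ℝ) +
    w • (Bmat bf bs * (fromBlocks 1 (-(w • Afs)) (w • Asf) 1)⁻¹ * @Wmat sf ss) = _
  rw [inv_fromBlocks_one_neg_smul w Afs Asf h1, Bmat_mul_fromBlocks_mul_Wmat]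
  ext i j
  fin_cases i <;> fin_cases j <;>
    simp [df, ds, smul_mulVec, neg_mulVec, ← mulVec_mulVec] <;> ring

/-- Stability matrix of a GARK method on the antisymmetric test problem: the explicit
2×2 form in terms of `d_f` and `d_s`. -/
theorem stmt_9 (bf : Fin sf → ℝ) (bs : Fin ss → ℝ)
    (Afs : Matrix (Fin sf) (Fin ss) ℝ) (Asf : Matrix (Fin ss) (Fin sf) ℝ) (w : ℝ)
    (h1 : IsUnit ((1 + (w ^ 2) • (Afs * Asf)) : Matrix (Fin sf) (Fin sf) ℝ).det)
    (h2 : IsUnit ((1 + (w ^ 2) • (Asf * Afs)) : Matrix (Fin ss) (Fin ss) ℝ).det) :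
    let df : Fin sf → ℝ := (1 + (w ^ 2) • (Afs * Asf))⁻¹ *ᵥ fun _ => 1
    let ds : Fin ss → ℝ := (1 + (w ^ 2) • (Asf * Afs))⁻¹ *ᵥ fun _ => 1
    (1 : Matrix (Fin 2) (Fin 2) ℝ) +
        w • (Bmat bf bs * (Matrix.fromBlocks 1 (-(w • Afs)) (w • Asf) 1)⁻¹ * Wmat) =
      !![1 - w ^ 2 * (bf ⬝ᵥ (Afs *ᵥ ds)), w * (bf ⬝ᵥ df);
         -(w * (bs ⬝ᵥ ds)), 1 - w ^ 2 * (bs ⬝ᵥ (Asf *ᵥ df))] :=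
  stmt_9_general bf bs Afs Asf w h1

end Stmt9
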